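/- Let $X \sim \mathrm{Exp}(\lambda)$ with $\lambda > 0$ and let $p \sim U(a,b)$ with $0 < a < b \le 1$ be independent. Then $\lambda \cdot \mathbb{E}[(1 - e^{-X})(1 - \log_2 p) - X] = \frac{\lambda}{\lambda + 1}\left(1 + \frac{1}{\ln 2} - \frac{b \log_2 b - a \log_2 a}{b-a}\right) - 1$. -/

import Mathlib

/-! Average first over `p`: by linearity the inner integral only sees the uniform mean of
`1 - log₂ p`, which `∫ log = s log s - s` evaluates to `1 + 1/ln 2 - (b log₂ b - a log₂ a)/(b - a)`.
The remaining expectation over `X ~ Exp(λ)` needs only `E[e^{-X}] = λ/(λ+1)` and `E[X] = 1/λ`,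
both Gamma integrals. -/

open MeasureTheory Set Real

theorem intervalIntegrable_logb (c a b : ℝ) : IntervalIntegrable (logb c) volume a b :=
  intervalIntegral.intervalIntegrable_log'.div_const _

theorem integral_logb (c a b : ℝ) :
    ∫ s in a..b, logb c s = b * logb c b - a * logb c a - (b - a) / log c := by
  simp only [logb, intervalIntegral.integral_div, integral_log]
  ring

theorem integral_mul_sub_mul_mul_inv {a b : ℝ} (hab : a ≠ b) {g : ℝ → ℝ}
    (hg : IntervalIntegrable g volume a b) (u x w : ℝ) :
    ∫ p in a..b, (u * g p - x) * w * (b - a)⁻¹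
      = (u * ((b - a)⁻¹ * ∫ p in a..b, g p) - x) * w := by
  have hba : b - a ≠ 0 := sub_ne_zero.mpr hab.symm
  rw [intervalIntegral.integral_mul_const, intervalIntegral.integral_mul_const,
    intervalIntegral.integral_sub (hg.const_mul u) intervalIntegrable_const,
    intervalIntegral.integral_const_mul, intervalIntegral.integral_const, smul_eq_mul]
  field_simp

theorem inv_sub_mul_integral_one_sub_logb {a b : ℝ} (hab : a ≠ b) :
    (b - a)⁻¹ * ∫ p in a..b, (1 - logb 2 p)
      = 1 + 1 / log 2 - (b * logb 2 b - a * logb 2 a) / (b - a) := by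
  have hba : b - a ≠ 0 := sub_ne_zero.mpr hab.symm
  rw [intervalIntegral.integral_sub intervalIntegrable_const (intervalIntegrable_logb 2 a b),
    intervalIntegral.integral_const, smul_eq_mul, integral_logb]
  field_simp
  ring

section ExponentialMoments

variable {r : ℝ}

theorem integrableOn_exp_neg_mul_Ioi (hr : 0 < r) :
    IntegrableOn (fun x : ℝ => exp (-(r * x))) (Ioi 0) := by
  simpa only [neg_mul] using exp_neg_integrableOn_Ioi 0 hr

theorem integrableOn_mul_exp_neg_mul_Ioi (hr : 0 < r) :
    IntegrableOn (fun x : ℝ => x * exp (-(r * x))) (Ioi 0) := by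
  simpa [rpow_one, neg_mul] using
    integrableOn_rpow_mul_exp_neg_mul_rpow (s := 1) (p := 1) (by norm_num) one_pos hr

theorem integral_exp_neg_mul_Ioi (hr : 0 < r) :
    ∫ x in Ioi (0:ℝ), exp (-(r * x)) = r⁻¹ := by
  simpa [rpow_one, Gamma_one] using integral_rpow_mul_exp_neg_mul_Ioi one_pos hr

theorem integral_mul_exp_neg_mul_Ioi (hr : 0 < r) :
    ∫ x in Ioi (0:ℝ), x * exp (-(r * x)) = (r ^ 2)⁻¹ := by
  have h := integral_rpow_mul_exp_neg_mul_Ioi two_pos hr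
  norm_num [Gamma_two] at h
  exact h

end ExponentialMoments

theorem mul_integral_Ioi_one_sub_exp_neg_mul_sub {l : ℝ} (hl : 0 < l) (c : ℝ) :
    l * ∫ x in Ioi (0:ℝ), ((1 - exp (-x)) * c - x) * (l * exp (-(l * x)))
      = l / (l + 1) * c - 1 := by
  have hl1 : 0 < l + 1 := by linarith
  have hsplit : ∀ x : ℝ, ((1 - exp (-x)) * c - x) * (l * exp (-(l * x)))
      = l * c * exp (-(l * x)) - l * c * exp (-((l + 1) * x)) - l * (x * exp (-(l * x))) := by
    intro x
    rw [show -((l + 1) * x) = -(l * x) + -x by ring, exp_add]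
    ring
  have hE := (integrableOn_exp_neg_mul_Ioi hl).const_mul (l * c)
  have hE1 := (integrableOn_exp_neg_mul_Ioi hl1).const_mul (l * c)
  have hXE := (integrableOn_mul_exp_neg_mul_Ioi hl).const_mul l
  simp_rw [hsplit]
  rw [integral_sub ?_ hXE, integral_sub hE hE1,
    integral_const_mul, integral_const_mul, integral_const_mul,
    integral_exp_neg_mul_Ioi hl, integral_exp_neg_mul_Ioi hl1, integral_mul_exp_neg_mul_Ioi hl]
  · field_simp
    ring
  · exact hE.sub hE1

theorem time_average_dope_general (l a b : ℝ) (hl : 0 < l) (hab : a < b) :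
    l * ∫ x in Set.Ioi (0:ℝ), ∫ p in a..b,
        (((1 - Real.exp (-x)) * (1 - Real.logb 2 p) - x)
          * (l * Real.exp (-(l * x))) * (b - a)⁻¹)
      = l / (l + 1) * (1 + 1 / Real.log 2
          - (b * Real.logb 2 b - a * Real.logb 2 a) / (b - a)) - 1 := by
  have hint : IntervalIntegrable (fun p => 1 - logb 2 p) volume a b :=
    intervalIntegrable_const.sub (intervalIntegrable_logb 2 a b)
  simp_rw [integral_mul_sub_mul_mul_inv hab.ne hint, inv_sub_mul_integral_one_sub_logb hab.ne]
  exact mul_integral_Ioi_one_sub_exp_neg_mul_sub hl _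

/-- Closed form of the time-average DoPE `H̄ = λ E[Q_i]` for independent
`X ~ Exp(λ)` and `p ~ U(a,b)`. -/
theorem time_average_dope (l a b : ℝ) (hl : 0 < l) (ha : 0 < a) (hab : a < b) (hb : b ≤ 1) :
    l * ∫ x in Set.Ioi (0:ℝ), ∫ p in a..b,
        (((1 - Real.exp (-x)) * (1 - Real.logb 2 p) - x)
          * (l * Real.exp (-(l * x))) * (b - a)⁻¹)
      = l / (l + 1) * (1 + 1 / Real.log 2
          - (b * Real.logb 2 b - a * Real.logb 2 a) / (b - a)) - 1 :=
  time_average_dope_general l a b hl hab
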